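/- Let A₁,…,A_N, s₁,…,s_N, k₁,…,k_N be positive integers and set E = s₁[k₁] × ⋯ × s_N[k_N] ⊆ ℤ_{A₁} × ⋯ × ℤ_{A_N}, where all points of s_j[k_j] are assumed distinct mod A_j for each j. Write A_j' = A_j / gcd(A_j, s_j). Then E is a spectral set if and only if E is a tile, and both hold precisely when k_j divides A_j' for every j = 1,…,N. -/

import Mathlib

/-- The set `E = s₁[k₁] × ⋯ × s_N[k_N]` in `ℤ_{A₁} × ⋯ × ℤ_{A_N}`,
where `s[k] = {0, s, 2s, …, (k−1)s}`. -/
def dilCube {N : ℕ} (A s k : Fin N → ℕ) : Finset (∀ j, ZMod (A j)) :=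
  Finset.image (fun v : ∀ j, Fin (k j) => fun j => (((v j : ℕ) * s j : ℕ) : ZMod (A j)))
    Finset.univ

/-- `E` tiles the abelian group `G` with translate set `T`. -/
def Tiles {G : Type*} [AddCommGroup G] (E T : Finset G) : Prop :=
  ∀ x : G, ∃! p : G × G, p.1 ∈ E ∧ p.2 ∈ T ∧ x = p.1 + p.2

/-- The character `e_λ(x) = exp(2πi Σ_j λ_j x_j / A_j)`. -/
noncomputable def ePi {N : ℕ} (A : Fin N → ℕ) (lam x : ∀ j, ZMod (A j)) : ℂ :=
  Complex.exp (2 * (Real.pi : ℂ) * Complex.I *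
    ∑ j, ((lam j).val : ℂ) * ((x j).val : ℂ) / (A j : ℂ))

/-- `Λ` is a spectrum of `E`. -/
def IsSpectrum {N : ℕ} (A : Fin N → ℕ) (E L : Finset (∀ j, ZMod (A j))) : Prop :=
  L.card = E.card ∧
  ∀ l ∈ L, ∀ m ∈ L, l ≠ m →
    ∑ x ∈ E, ePi A l x * (starRingEnd ℂ) (ePi A m x) = 0

/-!
On each axis `s[k]` is the progression `{0, a, …, (k - 1) • a}` with `a = s` in `ZMod A`, and
`A' = addOrderOf a`.

Spectrality: the Fourier transform of the box factors over the axes, and on one axis the geometric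
sum `∑ i < k, ψ (d * a) ^ i` vanishes iff `d * a ≠ 0` and `k • (d * a) = 0`. If `k ∣ A'` the
frequencies `i • (A' / k)` form a spectrum. Conversely, cutting `ZMod A` into `gcd k A'` blocks, two
frequencies whose products with `a` lie in the same block on every axis are never orthogonal, so a
spectrum has at most `∏ gcd kⱼ A'ⱼ` elements; since it has `∏ kⱼ`, every `kⱼ` divides `A'ⱼ`.

Tiling: if `k ∣ A'` the progression tiles `⟨a⟩` with the multiples of `k • a`, and `ZMod A` after
adding coset representatives. Conversely, a tiling of the box restricted to an axis gives
`f : ZMod A → ℕ` with `∑ i < k, f (y - i • a) = 1` for all `y`. Comparing consecutive windows makes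
`f` periodic with period `k • a`, hence with period `gcd k A' • a`, and then every window is
`k / gcd k A'` times a shorter one, which forces `k = gcd k A'`.
-/

open Finset

lemma Function.Periodic.sum_range_mul {M : Type*} [AddCommMonoid M] {h : ℕ → M} {g : ℕ}
    (hh : Function.Periodic h g) (c : ℕ) :
    ∑ i ∈ range (g * c), h i = c • ∑ i ∈ range g, h i := by
  induction c with
  | zero => simp
  | succ c ih =>
    rw [mul_add_one, sum_range_add, ih, succ_nsmul]
    congr 1
    exact sum_congr rfl fun i _ => by simpa [add_comm, mul_comm] using hh.nat_mul c i

section Progression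
variable {G : Type*} [AddCommGroup G]

def progression [DecidableEq G] (a : G) (k : ℕ) : Finset G := (range k).image (· • a)

lemma mem_progression [DecidableEq G] {a x : G} {k : ℕ} :
    x ∈ progression a k ↔ ∃ i < k, i • a = x := by
  simp [progression]

lemma sum_progression [DecidableEq G] {M : Type*} [AddCommMonoid M] {a : G} {k : ℕ}
    (hk : k ≤ addOrderOf a) (f : G → M) :
    ∑ x ∈ progression a k, f x = ∑ i ∈ range k, f (i • a) :=
  sum_image fun _ hi _ hj h =>
    nsmul_injOn_Iio_addOrderOf (lt_of_lt_of_le (mem_range.mp hi) hk)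
      (lt_of_lt_of_le (mem_range.mp hj) hk) h

lemma card_progression [DecidableEq G] {a : G} {k : ℕ} (hk : k ≤ addOrderOf a) :
    #(progression a k) = k := by
  rw [card_eq_sum_ones, sum_progression hk, sum_const, card_range, smul_eq_mul, mul_one]

lemma le_addOrderOf_of_injective [Finite G] {a : G} {k : ℕ}
    (h : Function.Injective fun i : Fin k => (i : ℕ) • a) : k ≤ addOrderOf a := by
  by_contra! hlt
  have h0 : (⟨addOrderOf a, hlt⟩ : Fin k) = ⟨0, by omega⟩ :=
    h (by simp only [addOrderOf_nsmul_eq_zero, zero_smul])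
  exact (addOrderOf_pos a).ne' (Fin.mk.inj h0)

lemma periodic_of_sum_sub_nsmul_eq_one {a : G} {k : ℕ} (hk : 0 < k) {f : G → ℕ}
    (h : ∀ y, ∑ i ∈ range k, f (y - i • a) = 1) : Function.Periodic f (k • a) := by
  obtain ⟨K, rfl⟩ : ∃ K, k = K + 1 := ⟨k - 1, by omega⟩
  intro z
  -- the windows at `z + K • a` and at `z + (K + 1) • a` share all terms but one
  have hlast := h (z + K • a)
  have hfirst := h (z + (K + 1) • a)
  rw [sum_range_succ] at hlast
  rw [sum_range_succ', zero_smul, sub_zero] at hfirst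
  have hshift : ∀ i, z + (K + 1) • a - (i + 1) • a = z + K • a - i • a := fun i => by
    simp only [add_smul, one_smul]; abel
  simp only [hshift, add_sub_cancel_right] at hfirst hlast
  omega

lemma dvd_addOrderOf_of_sum_sub_nsmul_eq_one {a : G} {k : ℕ} (hk : 0 < k) {f : G → ℕ}
    (h : ∀ y, ∑ i ∈ range k, f (y - i • a) = 1) : k ∣ addOrderOf a := by
  set g := k.gcd (addOrderOf a)
  have hga : (g : ℤ) • a = Nat.gcdA k (addOrderOf a) • (k • a) := by
    rw [Nat.gcd_eq_gcd_ab, add_smul, mul_comm, mul_smul, mul_comm, mul_smul, natCast_zsmul,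
      natCast_zsmul, addOrderOf_nsmul_eq_zero, smul_zero, add_zero]
  have hper : Function.Periodic (fun i : ℕ => f (-(i • a))) g := fun i => by
    have := (hga ▸ (periodic_of_sum_sub_nsmul_eq_one hk h).zsmul _ :
      Function.Periodic f ((g : ℤ) • a)).sub_eq (-(i • a))
    rwa [natCast_zsmul, sub_eq_add_neg, ← neg_add, ← add_smul] at this
  obtain ⟨c, hc⟩ : g ∣ k := Nat.gcd_dvd_left _ _
  have h0 := h 0
  simp only [zero_sub] at h0
  rw [hc, hper.sum_range_mul, smul_eq_mul] at h0
  have : k = g := by rw [hc, Nat.eq_one_of_mul_eq_one_right h0, mul_one]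
  exact this ▸ Nat.gcd_dvd_right _ _

lemma exists_tiles_progression [Fintype G] [DecidableEq G] {a : G} {k : ℕ} (hk : k ∣ addOrderOf a) :
    ∃ T, Tiles (progression a k) T := by
  classical
  set H := AddSubgroup.zmultiples a
  have hk0 : 0 < k := Nat.pos_of_dvd_of_pos hk (addOrderOf_pos a)
  -- `x = q.out + m • a` with `m < addOrderOf a`, and `m = i + k * j` with `i < k`
  have hdecomp (x : G) : ∃ m < addOrderOf a, m • a = x - (x : G ⧸ H).out := by
    have hmem : x - (x : G ⧸ H).out ∈ H := by
      rw [sub_eq_neg_add, ← QuotientAddGroup.eq, QuotientAddGroup.out_eq']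
    simpa using ((isOfFinAddOrder_of_finite a).mem_zmultiples_iff_mem_range_addOrderOf).mp hmem
  refine ⟨(range (addOrderOf a / k) ×ˢ (univ : Finset (G ⧸ H))).image
    fun p => p.1 • (k • a) + p.2.out, fun x => ?_⟩
  obtain ⟨m, hm, hmx⟩ := hdecomp x
  refine ⟨((m % k) • a, (m / k) • (k • a) + (x : G ⧸ H).out), ⟨?_, ?_, ?_⟩, ?_⟩
  · exact mem_progression.mpr ⟨m % k, Nat.mod_lt m hk0, rfl⟩
  · exact mem_image.mpr ⟨(m / k, x), mem_product.mpr
      ⟨mem_range.mpr (Nat.div_lt_div_of_lt_of_dvd hk hm), mem_univ _⟩, rfl⟩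
  · rw [← add_assoc, smul_smul, ← add_smul, mul_comm, Nat.mod_add_div, hmx, sub_add_cancel]
  · rintro ⟨e, t⟩ ⟨he, ht, hx⟩
    obtain ⟨i, hi, rfl⟩ := mem_progression.mp he
    obtain ⟨⟨j, q⟩, hjq, rfl⟩ := mem_image.mp ht
    obtain ⟨hj, -⟩ := mem_product.mp hjq
    rw [mem_range] at hj
    dsimp only at hx hj
    have hijH : (i + k * j) • a ∈ H := AddSubgroup.nsmul_mem_zmultiples a _
    have hq : (x : G ⧸ H) = q := by
      rw [hx, ← add_assoc, smul_smul, ← add_smul, mul_comm j, ← QuotientAddGroup.out_eq' q,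
        QuotientAddGroup.eq, QuotientAddGroup.out_eq']
      simpa using hijH
    have hij : i + k * j = m := by
      refine nsmul_injOn_Iio_addOrderOf ?_ hm ?_
      · calc i + k * j < k * (j + 1) := by linarith
          _ ≤ k * (addOrderOf a / k) := Nat.mul_le_mul_left k hj
          _ = addOrderOf a := Nat.mul_div_cancel' hk
      · show (i + k * j) • a = m • a
        rw [hmx, hq, hx, add_smul, mul_comm, mul_smul]
        abel
    subst hq hij
    rw [Nat.add_mul_mod_self_left, Nat.mod_eq_of_lt hi, Nat.add_mul_div_left _ _ hk0,
      Nat.div_eq_of_lt hi, zero_add]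

end Progression

section Tiling
variable {G : Type*} [AddCommGroup G]

lemma Tiles.card_filter_sub_mem [DecidableEq G] {E T : Finset G} (h : Tiles E T) (x : G) :
    #{t ∈ T | x - t ∈ E} = 1 := by
  obtain ⟨⟨e, t⟩, ⟨he, ht, hx⟩, huniq⟩ := h x
  refine card_eq_one.mpr ⟨t, eq_singleton_iff_unique_mem.mpr ⟨?_, fun t' ht' => ?_⟩⟩
  · simpa [ht, hx] using he
  · obtain ⟨ht'T, ht'E⟩ := mem_filter.mp ht'
    exact congrArg Prod.snd (huniq (x - t', t') ⟨ht'E, ht'T, (sub_add_cancel x t').symm⟩)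

variable {ι : Type*} [Fintype ι] [DecidableEq ι] {G : ι → Type*} [∀ j, AddCommGroup (G j)]

lemma Tiles.piFinset {E T : ∀ j, Finset (G j)} (h : ∀ j, Tiles (E j) (T j)) :
    Tiles (Fintype.piFinset E) (Fintype.piFinset T) := by
  intro x
  choose p hp huniq using fun j => h j (x j)
  refine ⟨(fun j => (p j).1, fun j => (p j).2), ⟨?_, ?_, ?_⟩, ?_⟩
  · exact Fintype.mem_piFinset.mpr fun j => (hp j).1
  · exact Fintype.mem_piFinset.mpr fun j => (hp j).2.1
  · exact funext fun j => (hp j).2.2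
  · rintro ⟨e, t⟩ ⟨he, ht, hx⟩
    have hj j : (e j, t j) = p j := huniq j (e j, t j)
      ⟨Fintype.mem_piFinset.mp he j, Fintype.mem_piFinset.mp ht j, congrFun hx j⟩
    exact Prod.ext (funext fun j => congrArg Prod.fst (hj j))
      (funext fun j => congrArg Prod.snd (hj j))

lemma Tiles.exists_sum_sub_eq_one [∀ j, DecidableEq (G j)] {E : ∀ j, Finset (G j)}
    {T : Finset (∀ j, G j)} (h : Tiles (Fintype.piFinset E) T) (j₀ : ι) :
    ∃ f : G j₀ → ℕ, ∀ y, ∑ e ∈ E j₀, f (y - e) = 1 := by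
  set T' := {t ∈ T | ∀ j ≠ j₀, -t j ∈ E j}
  refine ⟨fun z => #{t ∈ T' | t j₀ = z}, fun y => ?_⟩
  calc ∑ e ∈ E j₀, #{t ∈ T' | t j₀ = y - e}
      = ∑ e ∈ E j₀, #{t ∈ T' | y - t j₀ = e} := by
        refine sum_congr rfl fun e _ => congrArg card (filter_congr fun t _ => ?_)
        rw [eq_sub_iff_add_eq, sub_eq_iff_eq_add, add_comm, eq_comm]
    _ = #{t ∈ T' | y - t j₀ ∈ E j₀} := sum_card_fiberwise_eq_card_filter _ _ _
    _ = #{t ∈ T | Pi.single j₀ y - t ∈ Fintype.piFinset E} := by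
        rw [filter_filter]
        refine congrArg card (filter_congr fun t _ => ?_)
        simp only [Fintype.mem_piFinset, Pi.sub_apply]
        constructor
        · rintro ⟨hne, hj₀⟩ j
          by_cases hj : j = j₀
          · subst hj; simpa using hj₀
          · simpa [Pi.single_eq_of_ne hj] using hne j hj
        · intro hall
          refine ⟨fun j hj => ?_, by simpa using hall j₀⟩
          simpa [Pi.single_eq_of_ne hj] using hall j
    _ = 1 := h.card_filter_sub_mem _

end Tiling

theorem exists_tiles_piFinset_progression_iff {ι : Type*} [Fintype ι] [DecidableEq ι]
    {G : ι → Type*} [∀ j, AddCommGroup (G j)] [∀ j, Fintype (G j)] [∀ j, DecidableEq (G j)]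
    {a : ∀ j, G j} {k : ι → ℕ} (hk : ∀ j, 0 < k j) (hka : ∀ j, k j ≤ addOrderOf (a j)) :
    (∃ T, Tiles (Fintype.piFinset fun j => progression (a j) (k j)) T) ↔
      ∀ j, k j ∣ addOrderOf (a j) := by
  constructor
  · rintro ⟨T, hT⟩ j
    obtain ⟨f, hf⟩ := hT.exists_sum_sub_eq_one j
    exact dvd_addOrderOf_of_sum_sub_nsmul_eq_one (hk j) fun y => by
      simpa only [sum_progression (hka j)] using hf y
  · intro hdvd
    choose T hT using fun j => exists_tiles_progression (hdvd j)
    exact ⟨_, Tiles.piFinset hT⟩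

lemma geom_sum_eq_zero_iff_of_ne_zero {K : Type*} [Field K] [CharZero K] {ω : K} {k : ℕ}
    (hk : k ≠ 0) : ∑ i ∈ range k, ω ^ i = 0 ↔ ω ≠ 1 ∧ ω ^ k = 1 := by
  by_cases hω : ω = 1
  · simp [hω, hk]
  · rw [geom_sum_eq hω, div_eq_zero_iff, sub_eq_zero, sub_eq_zero]
    simp [hω]

lemma AddChar.sum_range_nsmul_eq_zero_iff {G K : Type*} [AddCommGroup G] [Field K] [CharZero K]
    {ψ : AddChar G K} (hψ : Function.Injective ψ) {k : ℕ} (hk : k ≠ 0) (b : G) :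
    ∑ i ∈ range k, ψ (i • b) = 0 ↔ b ≠ 0 ∧ k • b = 0 := by
  simp_rw [AddChar.map_nsmul_eq_pow]
  rw [geom_sum_eq_zero_iff_of_ne_zero hk, ← AddChar.map_nsmul_eq_pow, ← ψ.map_zero_eq_one,
    hψ.ne_iff, hψ.eq_iff]

namespace ZMod
variable {A g : ℕ} [NeZero A]

lemma val_div_lt (hg : g ∣ A) (x : ZMod A) : x.val / (A / g) < g :=
  Nat.div_lt_of_lt_mul ((Nat.div_mul_cancel hg).symm ▸ x.val_lt)

lemma eq_of_val_div_eq_of_nsmul_sub_eq_zero (hg : g ∣ A) {x y : ZMod A}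
    (hdiv : x.val / (A / g) = y.val / (A / g)) (hsub : g • (x - y) = 0) : x = y := by
  -- the `g`-torsion of `ZMod A` consists of the multiples of `A / g`
  obtain ⟨M, rfl⟩ := hg
  have hg0 : g ≠ 0 := left_ne_zero_of_mul (NeZero.ne (g * M))
  rw [Nat.mul_div_cancel_left M (Nat.pos_of_ne_zero hg0)] at hdiv
  have hmod : g * x.val ≡ g * y.val [MOD g * M] := by
    rw [← ZMod.natCast_eq_natCast_iff, Nat.cast_mul, Nat.cast_mul, ZMod.natCast_zmod_val,
      ZMod.natCast_zmod_val, ← nsmul_eq_mul, ← nsmul_eq_mul, ← sub_eq_zero, ← smul_sub, hsub]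
  refine val_injective _ ?_
  rw [← Nat.div_add_mod x.val M, ← Nat.div_add_mod y.val M, hdiv,
    Nat.ModEq.mul_left_cancel' hg0 hmod]

end ZMod

section Spectrum
variable {N : ℕ} {A : Fin N → ℕ} [∀ j, NeZero (A j)]

lemma ePi_eq_prod (l x : ∀ j, ZMod (A j)) :
    ePi A l x = ∏ j, (ZMod.stdAddChar (l j * x j) : ℂ) := by
  rw [ePi, Finset.mul_sum, Complex.exp_sum]
  refine prod_congr rfl fun j _ => ?_
  have hval : l j * x j = (((l j).val * (x j).val : ℕ) : ZMod (A j)) := by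
    simp only [Nat.cast_mul, ZMod.natCast_zmod_val]
  rw [hval, ZMod.stdAddChar_apply, ZMod.toCircle_natCast]
  push_cast
  ring_nf

lemma ePi_mul_conj_ePi (l m x : ∀ j, ZMod (A j)) :
    ePi A l x * starRingEnd ℂ (ePi A m x) = ∏ j, (ZMod.stdAddChar ((l j - m j) * x j) : ℂ) := by
  rw [ePi_eq_prod, ePi_eq_prod, map_prod, ← prod_mul_distrib]
  refine prod_congr rfl fun j _ => ?_
  rw [← AddChar.map_neg_eq_conj, ← AddChar.map_add_eq_mul, sub_mul, sub_eq_add_neg]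

lemma sum_piFinset_ePi_mul_conj_ePi (E : ∀ j, Finset (ZMod (A j))) (l m : ∀ j, ZMod (A j)) :
    ∑ x ∈ Fintype.piFinset E, ePi A l x * starRingEnd ℂ (ePi A m x) =
      ∏ j, ∑ e ∈ E j, (ZMod.stdAddChar ((l j - m j) * e) : ℂ) := by
  simp_rw [ePi_mul_conj_ePi]
  exact (prod_univ_sum E fun j e => (ZMod.stdAddChar ((l j - m j) * e) : ℂ)).symm

variable {a : ∀ j, ZMod (A j)} {k : Fin N → ℕ}

lemma sum_piFinset_progression_ePi_eq_zero_iff (hk : ∀ j, 0 < k j)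
    (hka : ∀ j, k j ≤ addOrderOf (a j)) (l m : ∀ j, ZMod (A j)) :
    ∑ x ∈ Fintype.piFinset (fun j => progression (a j) (k j)),
        ePi A l x * starRingEnd ℂ (ePi A m x) = 0 ↔
      ∃ j, (l j - m j) * a j ≠ 0 ∧ k j • ((l j - m j) * a j) = 0 := by
  rw [sum_piFinset_ePi_mul_conj_ePi, prod_eq_zero_iff]
  simp only [mem_univ, true_and, sum_progression (hka _), mul_smul_comm]
  exact exists_congr fun j =>
    AddChar.sum_range_nsmul_eq_zero_iff ZMod.injective_stdAddChar (hk j).ne' _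

lemma exists_isSpectrum_of_dvd (hka : ∀ j, k j ≤ addOrderOf (a j))
    (hdvd : ∀ j, k j ∣ addOrderOf (a j)) :
    ∃ L, IsSpectrum A (Fintype.piFinset fun j => progression (a j) (k j)) L := by
  -- frequencies `i • c` with `c * a = (addOrderOf a / k) • a` of order exactly `k`
  have hk (j) : 0 < k j := Nat.pos_of_dvd_of_pos (hdvd j) (addOrderOf_pos _)
  set c : ∀ j, ZMod (A j) := fun j => ((addOrderOf (a j) / k j : ℕ) : ZMod (A j))
  have hca (j) : addOrderOf (c j * a j) = k j := by
    rw [← nsmul_eq_mul, addOrderOf_nsmul, Nat.gcd_eq_right (Nat.div_dvd_of_dvd (hdvd j)),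
      Nat.div_div_self (hdvd j) (addOrderOf_pos (a j)).ne']
  have hkc (j) : k j ≤ addOrderOf (c j) := by
    rw [← hca, ← ZMod.natCast_zmod_val (a j), mul_comm, ← nsmul_eq_mul]
    exact Nat.le_of_dvd (addOrderOf_pos _) (addOrderOf_smul_dvd _)
  refine ⟨Fintype.piFinset fun j => progression (c j) (k j), ?_, fun l hl m hm hne => ?_⟩
  · simp only [Fintype.card_piFinset, card_progression (hkc _), card_progression (hka _)]
  rw [sum_piFinset_progression_ePi_eq_zero_iff hk hka]
  obtain ⟨j, hj⟩ := Function.ne_iff.mp hne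
  obtain ⟨i, hi, hli⟩ := mem_progression.mp (Fintype.mem_piFinset.mp hl j)
  obtain ⟨i', hi', hmi⟩ := mem_progression.mp (Fintype.mem_piFinset.mp hm j)
  have hii' : i ≠ i' := fun h => hj (by rw [← hli, ← hmi, h])
  refine ⟨j, ?_, ?_⟩
  · rw [← hli, ← hmi, sub_mul, smul_mul_assoc, smul_mul_assoc, sub_ne_zero]
    exact fun h => hii' (nsmul_injOn_Iio_addOrderOf (by rwa [hca]) (by rwa [hca]) h)
  · rw [← hli, ← hmi, sub_mul, smul_mul_assoc, smul_mul_assoc, smul_sub, smul_comm (k j) i,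
      smul_comm (k j) i', ← hca, addOrderOf_nsmul_eq_zero, smul_zero, smul_zero, sub_zero]

lemma dvd_of_isSpectrum (hk : ∀ j, 0 < k j) (hka : ∀ j, k j ≤ addOrderOf (a j))
    {L : Finset (∀ j, ZMod (A j))}
    (hL : IsSpectrum A (Fintype.piFinset fun j => progression (a j) (k j)) L) :
    ∀ j, k j ∣ addOrderOf (a j) := by
  obtain ⟨hcard, horth⟩ := hL
  set g : Fin N → ℕ := fun j => (k j).gcd (addOrderOf (a j))
  have hgA (j) : g j ∣ A j :=
    (Nat.gcd_dvd_right _ _).trans (by simpa only [ZMod.card] using addOrderOf_dvd_card (x := a j))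
  -- `g j` blocks per axis: frequencies in a common block cannot be orthogonal
  set Ψ : (∀ j, ZMod (A j)) → Fin N → ℕ := fun l j => (l j * a j).val / (A j / g j)
  have hinj : Set.InjOn Ψ L := by
    intro l hl m hm hlm
    by_contra hne
    obtain ⟨j, hb, hkb⟩ :=
      (sum_piFinset_progression_ePi_eq_zero_iff hk hka l m).mp (horth l hl m hm hne)
    refine hb (sub_mul (l j) (m j) (a j) ▸ sub_eq_zero.mpr
      (ZMod.eq_of_val_div_eq_of_nsmul_sub_eq_zero (hgA j) (congrFun hlm j) ?_))
    rw [← sub_mul, ← addOrderOf_dvd_iff_nsmul_eq_zero]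
    refine Nat.dvd_gcd (addOrderOf_dvd_of_nsmul_eq_zero hkb) (addOrderOf_dvd_of_nsmul_eq_zero ?_)
    rw [← mul_smul_comm, addOrderOf_nsmul_eq_zero, mul_zero]
  have hle : ∏ j, k j ≤ ∏ j, g j :=
    calc ∏ j, k j = #L := by
          simp only [hcard, Fintype.card_piFinset, card_progression (hka _)]
      _ ≤ #(Fintype.piFinset fun j => range (g j)) :=
          card_le_card_of_injOn Ψ (fun l _ => Fintype.mem_piFinset.mpr fun j =>
            mem_range.mpr (ZMod.val_div_lt (hgA j) _)) hinj
      _ = ∏ j, g j := by simp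
  intro j
  have hgk : g j = k j := by
    by_contra hne
    refine hle.not_gt (prod_lt_prod (fun j _ => Nat.gcd_pos_of_pos_left _ (hk j))
      (fun j _ => Nat.gcd_le_left _ (hk j)) ⟨j, mem_univ j, ?_⟩)
    exact lt_of_le_of_ne (Nat.gcd_le_left _ (hk j)) hne
  exact hgk ▸ Nat.gcd_dvd_right _ _

theorem exists_isSpectrum_piFinset_progression_iff (hk : ∀ j, 0 < k j)
    (hka : ∀ j, k j ≤ addOrderOf (a j)) :
    (∃ L, IsSpectrum A (Fintype.piFinset fun j => progression (a j) (k j)) L) ↔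
      ∀ j, k j ∣ addOrderOf (a j) :=
  ⟨fun ⟨_, hL⟩ => dvd_of_isSpectrum hk hka hL, exists_isSpectrum_of_dvd hka⟩

end Spectrum

lemma dilCube_eq_piFinset {N : ℕ} (A s k : Fin N → ℕ) :
    dilCube A s k = Fintype.piFinset fun j => progression ((s j : ℕ) : ZMod (A j)) (k j) := by
  rw [dilCube, ← Fintype.piFinset_univ,
    ← Fintype.piFinset_image fun j (i : Fin (k j)) => (((i : ℕ) * s j : ℕ) : ZMod (A j))]
  congr 1
  funext j
  ext x
  simp [progression, Fin.exists_iff, nsmul_eq_mul]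

theorem dilated_cube_spectral_iff_tile_general {N : ℕ} (A s k : Fin N → ℕ) [∀ j, NeZero (A j)]
    (hk : ∀ j, 0 < k j)
    (hdist : ∀ j, Function.Injective
      fun i : Fin (k j) => (((i : ℕ) * s j : ℕ) : ZMod (A j))) :
    ((∃ L : Finset (∀ j, ZMod (A j)), IsSpectrum A (dilCube A s k) L) ↔
        (∃ T : Finset (∀ j, ZMod (A j)), Tiles (dilCube A s k) T)) ∧
    ((∃ L : Finset (∀ j, ZMod (A j)), IsSpectrum A (dilCube A s k) L) ↔
        ∀ j, k j ∣ A j / Nat.gcd (A j) (s j)) := by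
  have hka (j) : k j ≤ addOrderOf ((s j : ℕ) : ZMod (A j)) :=
    le_addOrderOf_of_injective (by simpa only [Nat.cast_mul, nsmul_eq_mul] using hdist j)
  have hA' (j) : A j / (A j).gcd (s j) = addOrderOf ((s j : ℕ) : ZMod (A j)) :=
    (ZMod.addOrderOf_coe _ (NeZero.ne _)).symm
  simp only [dilCube_eq_piFinset, hA']
  have hspec := exists_isSpectrum_piFinset_progression_iff hk hka
  exact ⟨hspec.trans (exists_tiles_piFinset_progression_iff hk hka).symm, hspec⟩

/-- The dilated cube `E = s₁[k₁] × ⋯ × s_N[k_N]` is spectral iff it is a tile, and this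
happens exactly when `k_j ∣ A_j' = A_j/(A_j,s_j)` for all `j`. -/
theorem dilated_cube_spectral_iff_tile {N : ℕ} (A s k : Fin N → ℕ) [∀ j, NeZero (A j)]
    (hs : ∀ j, 0 < s j) (hk : ∀ j, 0 < k j)
    (hdist : ∀ j, Function.Injective
      fun i : Fin (k j) => (((i : ℕ) * s j : ℕ) : ZMod (A j))) :
    ((∃ L : Finset (∀ j, ZMod (A j)), IsSpectrum A (dilCube A s k) L) ↔
        (∃ T : Finset (∀ j, ZMod (A j)), Tiles (dilCube A s k) T)) ∧
    ((∃ L : Finset (∀ j, ZMod (A j)), IsSpectrum A (dilCube A s k) L) ↔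
        ∀ j, k j ∣ A j / Nat.gcd (A j) (s j)) :=
  dilated_cube_spectral_iff_tile_general A s k hk hdist
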